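/- For γ ≥ 1 and τ_d > 1, define f_d(τ_d) := 2h² (3 + (τ_d + 1) h''/h') + (3τ_d - 5)(τ_d + 1) h h' + τ_d(τ_d + 1)(τ_d² - 1)(h')², with h, h', h'' evaluated at τ_d. Then f_d(τ_d) > (1 + τ_d^{-1})(τ_d²(τ_d² - 1)(h')² - 2h) for all τ_d > 1, and consequently f_d(τ_d) > 0 for all τ_d > 1. -/

import Mathlib

/-!
Write `A = τ^(γ-1)`, so that `τ h' = A = (γ-1) h + 1` and `h''/h' = (γ-2)/τ`. Substituting,
`f_d - (1 + τ⁻¹)(τ²(τ²-1)(h')² - 2h)` collapses to `h((3(γ-1)(τ²-1) + 2(2τ-1)) h + 3(τ²-1))/τ`,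
which is positive because `h > 0`. For the positivity of `f_d` it remains to see `2h < (τ²-1)A²`:
from `A - 1 ≤ A log A` one gets `h ≤ A log τ`, and `log (τ²) < τ² - 1`, `A ≥ 1`.
-/

/-- Polytropic enthalpy: `h(τ) = (τ^(γ-1) - 1)/(γ-1)` for `γ > 1`, `log τ` for `γ = 1`. -/
noncomputable def enthalpy (γ τ : ℝ) : ℝ :=
  if γ = 1 then Real.log τ else (τ ^ (γ - 1) - 1) / (γ - 1)

/-- `f_d(τ) = 2h²(3 + (τ+1)h''/h') + (3τ-5)(τ+1)h h' + τ(τ+1)(τ²-1)(h')²`,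
with `h' = τ^(γ-2)` and `h'' = (γ-2)τ^(γ-3)` evaluated at `τ`. -/
noncomputable def fD (γ τ : ℝ) : ℝ :=
  2 * (enthalpy γ τ) ^ 2 * (3 + (τ + 1) * ((γ - 2) * τ ^ (γ - 3)) / τ ^ (γ - 2)) +
    (3 * τ - 5) * (τ + 1) * enthalpy γ τ * τ ^ (γ - 2) +
    τ * (τ + 1) * (τ ^ 2 - 1) * (τ ^ (γ - 2)) ^ 2

theorem sub_one_mul_enthalpy_add_one (γ τ : ℝ) :
    (γ - 1) * enthalpy γ τ + 1 = τ ^ (γ - 1) := by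
  by_cases hγ : γ = 1
  · simp [hγ]
  · rw [enthalpy, if_neg hγ, mul_div_cancel₀ _ (sub_ne_zero.2 hγ), sub_add_cancel]

theorem enthalpy_pos (γ : ℝ) {τ : ℝ} (hτ : 1 < τ) : 0 < enthalpy γ τ := by
  rw [enthalpy]
  split_ifs with hγ
  · exact Real.log_pos hτ
  rcases lt_or_gt_of_ne hγ with hγ | hγ
  · exact div_pos_of_neg_of_neg
      (sub_neg.2 (Real.rpow_lt_one_of_one_lt_of_neg hτ (by linarith))) (by linarith)
  · exact div_pos (sub_pos.2 (Real.one_lt_rpow hτ (by linarith))) (by linarith)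

theorem enthalpy_le_rpow_mul_log {γ τ : ℝ} (hγ : 1 ≤ γ) (hτ : 0 < τ) :
    enthalpy γ τ ≤ τ ^ (γ - 1) * Real.log τ := by
  rcases hγ.eq_or_lt with rfl | hγ
  · simp [enthalpy]
  have hA : 0 < τ ^ (γ - 1) := Real.rpow_pos_of_pos hτ _
  refine le_of_mul_le_mul_left ?_ (sub_pos.2 hγ)
  calc (γ - 1) * enthalpy γ τ = τ ^ (γ - 1) - 1 := by rw [← sub_one_mul_enthalpy_add_one]; ring
    _ = τ ^ (γ - 1) * (1 - (τ ^ (γ - 1))⁻¹) := by rw [mul_sub, mul_inv_cancel₀ hA.ne', mul_one]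
    _ ≤ τ ^ (γ - 1) * Real.log (τ ^ (γ - 1)) := by gcongr; exact Real.one_sub_inv_le_log_of_pos hA
    _ = (γ - 1) * (τ ^ (γ - 1) * Real.log τ) := by rw [Real.log_rpow hτ]; ring

theorem two_mul_enthalpy_lt {γ τ : ℝ} (hγ : 1 ≤ γ) (hτ : 1 < τ) :
    2 * enthalpy γ τ < τ ^ 2 * (τ ^ 2 - 1) * (τ ^ (γ - 2)) ^ 2 := by
  have hτ0 : 0 < τ := by linarith
  have hA : 1 ≤ τ ^ (γ - 1) := Real.one_le_rpow hτ.le (by linarith)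
  have hlog : 2 * Real.log τ < τ ^ 2 - 1 := by
    have := Real.log_lt_sub_one_of_pos (by positivity : 0 < τ ^ 2) (by nlinarith)
    rwa [Real.log_pow, Nat.cast_ofNat] at this
  have hrpow : τ ^ 2 * (τ ^ (γ - 2)) ^ 2 = (τ ^ (γ - 1)) ^ 2 := by
    rw [show γ - 2 = γ - 1 - 1 by ring, Real.rpow_sub_one hτ0.ne']
    field_simp
  calc 2 * enthalpy γ τ ≤ τ ^ (γ - 1) * (2 * Real.log τ) := by
        nlinarith [enthalpy_le_rpow_mul_log hγ hτ0]
    _ < τ ^ (γ - 1) * (τ ^ 2 - 1) := by gcongr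
    _ ≤ (τ ^ (γ - 1)) ^ 2 * (τ ^ 2 - 1) :=
        mul_le_mul_of_nonneg_right (by nlinarith) (by nlinarith)
    _ = τ ^ 2 * (τ ^ 2 - 1) * (τ ^ (γ - 2)) ^ 2 := by rw [← hrpow]; ring

theorem fD_sub_eq (γ : ℝ) {τ : ℝ} (hτ : 0 < τ) :
    fD γ τ - (1 + τ⁻¹) * (τ ^ 2 * (τ ^ 2 - 1) * (τ ^ (γ - 2)) ^ 2 - 2 * enthalpy γ τ) =
      enthalpy γ τ * ((3 * (γ - 1) * (τ ^ 2 - 1) + 2 * (2 * τ - 1)) * enthalpy γ τ +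
        3 * (τ ^ 2 - 1)) / τ := by
  have h2 : τ ^ (γ - 2) = τ ^ (γ - 1) / τ := by
    rw [show γ - 2 = γ - 1 - 1 by ring, Real.rpow_sub_one hτ.ne']
  have h3 : τ ^ (γ - 3) = τ ^ (γ - 1) / τ ^ 2 := by
    rw [show γ - 3 = γ - 2 - 1 by ring, Real.rpow_sub_one hτ.ne', h2, div_div, ← sq]
  have hA : τ ^ (γ - 1) ≠ 0 := (Real.rpow_pos_of_pos hτ _).ne'
  rw [fD, h2, h3]
  field_simp
  rw [← sub_one_mul_enthalpy_add_one]
  ring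

theorem lt_fD {γ τ : ℝ} (hγ : 1 ≤ γ) (hτ : 1 < τ) :
    (1 + τ⁻¹) * (τ ^ 2 * (τ ^ 2 - 1) * (τ ^ (γ - 2)) ^ 2 - 2 * enthalpy γ τ) < fD γ τ := by
  have hτ0 : 0 < τ := by linarith
  have hh := enthalpy_pos γ hτ
  have hτ2 : 0 < τ ^ 2 - 1 := by nlinarith
  have hcoef : 0 < 3 * (γ - 1) * (τ ^ 2 - 1) + 2 * (2 * τ - 1) := by
    nlinarith [mul_nonneg (sub_nonneg.2 hγ) hτ2.le]
  rw [← sub_pos, fD_sub_eq γ hτ0]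
  positivity

/-- For `γ ≥ 1` and `τ > 1`:
`f_d(τ) > (1 + τ⁻¹)(τ²(τ²-1)(h')² - 2h)`, and consequently `f_d(τ) > 0`. -/
theorem fD_pos (γ : ℝ) (hγ : 1 ≤ γ) :
    ∀ τ : ℝ, 1 < τ →
      (1 + τ⁻¹) * (τ ^ 2 * (τ ^ 2 - 1) * (τ ^ (γ - 2)) ^ 2 - 2 * enthalpy γ τ) < fD γ τ ∧
      0 < fD γ τ := by
  intro τ hτ
  have hlt := lt_fD hγ hτ
  have hfact := sub_pos.2 (two_mul_enthalpy_lt hγ hτ)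
  exact ⟨hlt, (mul_pos (by positivity) hfact).trans hlt⟩
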